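/- arXiv:2001.07788 — 2 statements merged into one kernel-verified Lean document; each statement's English description precedes it below -/
import Mathlib

section
/- Every k-sparse symmetric Boolean function f : {0,1}^n -> {0,1} with k < n/2 can be written as an exact threshold of ANDs: there exist monomials (ANDs of at most k variables) m_1, ..., m_T with T <= n^{O(k)}, integer coefficients, and an integer threshold, such that f(x)=1 iff the weighted sum of the monomials on x equals the threshold. -/
open Finset

private lemma key_choose (s d : ℕ) :
    ((s : ℤ) - d) * (s.choose d : ℤ) = ((d : ℤ) + 1) * (s.choose (d + 1) : ℤ) := by
  rcases le_or_gt d s with h | h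
  · have h0 := congrArg (Nat.cast : ℕ → ℤ) (Nat.choose_succ_right_eq s d)
    push_cast [Nat.cast_sub h] at h0
    linarith
  · have h1 : s.choose d = 0 := Nat.choose_eq_zero_of_lt h
    have h2 : s.choose (d + 1) = 0 :=
      Nat.choose_eq_zero_of_lt (h.trans (Nat.lt_succ_self d))
    simp [h1, h2]

private lemma newton (S : Finset ℕ) :
    ∃ c : ℕ → ℤ, ∀ s : ℕ,
      (∏ v ∈ S, ((s : ℤ) - v)) = ∑ d ∈ Finset.range (S.card + 1), c d * (s.choose d : ℤ) := by
  induction S using Finset.induction with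
  | empty => exact ⟨fun d => if d = 0 then 1 else 0, by simp⟩
  | @insert a S ha ih =>
    obtain ⟨c, hc⟩ := ih
    refine ⟨fun d => (d : ℤ) * c (d - 1) +
      (if d ≤ S.card then ((d : ℤ) - a) * c d else 0), fun s => ?_⟩
    rw [Finset.prod_insert ha, hc s, Finset.card_insert_of_notMem ha]
    have L : ((s : ℤ) - a) * ∑ d ∈ Finset.range (S.card + 1), c d * (s.choose d : ℤ)
        = (∑ d ∈ Finset.range (S.card + 1), ((d : ℤ) + 1) * c d * (s.choose (d + 1) : ℤ))
          + ∑ d ∈ Finset.range (S.card + 1), ((d : ℤ) - a) * c d * (s.choose d : ℤ) := by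
      rw [Finset.mul_sum, ← Finset.sum_add_distrib]
      refine Finset.sum_congr rfl fun d _ => ?_
      linear_combination (c d) * (key_choose s d)
    rw [L]
    have R : ∑ d ∈ Finset.range (S.card + 1 + 1),
        ((d : ℤ) * c (d - 1) + (if d ≤ S.card then ((d : ℤ) - a) * c d else 0))
          * (s.choose d : ℤ)
        = (∑ d ∈ Finset.range (S.card + 1 + 1), (d : ℤ) * c (d - 1) * (s.choose d : ℤ))
          + ∑ d ∈ Finset.range (S.card + 1 + 1),
              (if d ≤ S.card then ((d : ℤ) - a) * c d else 0) * (s.choose d : ℤ) := by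
      rw [← Finset.sum_add_distrib]
      exact Finset.sum_congr rfl fun d _ => by ring
    rw [R]
    congr 1
    · conv_rhs => rw [Finset.sum_range_succ']
      simp only [Nat.cast_zero, zero_mul, add_zero, Nat.add_sub_cancel]
      exact Finset.sum_congr rfl fun d _ => by push_cast; ring
    · conv_rhs => rw [Finset.sum_range_succ]
      rw [if_neg (by omega : ¬ S.card + 1 ≤ S.card), zero_mul, add_zero]
      refine (Finset.sum_congr rfl fun d hd => ?_).symm
      rw [if_pos (Nat.lt_succ_iff.mp (Finset.mem_range.mp hd))]

private lemma powerset_filter (n k : ℕ) (X : Finset (Fin n)) :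
    Finset.univ.filter (fun A : Finset (Fin n) => A.card ≤ k ∧ A ⊆ X)
      = (Finset.range (k + 1)).biUnion (fun d => X.powersetCard d) := by
  ext A
  simp only [Finset.mem_filter, Finset.mem_univ, true_and, Finset.mem_biUnion,
    Finset.mem_range, Finset.mem_powersetCard, Nat.lt_succ_iff]
  constructor
  · rintro ⟨h1, h2⟩; exact ⟨A.card, h1, h2, rfl⟩
  · rintro ⟨d, hd, h2, rfl⟩; exact ⟨hd, h2⟩

private lemma pairwise_powersetCard (n k : ℕ) (X : Finset (Fin n)) :
    (↑(Finset.range (k + 1)) : Set ℕ).PairwiseDisjoint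
      (fun d => X.powersetCard d) := by
  intro d _ d' _ hne
  simp only [Function.onFun]
  rw [Finset.disjoint_left]
  intro A hA hA'
  rw [Finset.mem_powersetCard] at hA hA'
  exact hne (hA.2.symm.trans hA'.2)

private lemma sum_over_subsets (n k : ℕ) (c : ℕ → ℤ) (X : Finset (Fin n)) :
    ∑ A ∈ Finset.univ.filter (fun A : Finset (Fin n) => A.card ≤ k),
        c A.card * (if A ⊆ X then (1 : ℤ) else 0)
      = ∑ d ∈ Finset.range (k + 1), (X.card.choose d : ℤ) * c d := by
  have h1 : ∑ A ∈ Finset.univ.filter (fun A : Finset (Fin n) => A.card ≤ k),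
      c A.card * (if A ⊆ X then (1 : ℤ) else 0)
      = ∑ A ∈ Finset.univ.filter (fun A : Finset (Fin n) => A.card ≤ k ∧ A ⊆ X),
          c A.card := by
    rw [← Finset.filter_filter]
    conv_rhs => rw [Finset.sum_filter]
    exact Finset.sum_congr rfl fun A _ => by by_cases h : A ⊆ X <;> simp [h]
  rw [h1, powerset_filter, Finset.sum_biUnion (pairwise_powersetCard n k X)]
  refine Finset.sum_congr rfl fun d _ => ?_
  have : ∑ A ∈ X.powersetCard d, c A.card = ∑ _A ∈ X.powersetCard d, c d :=
    Finset.sum_congr rfl fun A hA => by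
      rw [(Finset.mem_powersetCard.mp hA).2]
  rw [this, Finset.sum_const, Finset.card_powersetCard, nsmul_eq_mul]

theorem stmt_5 :
    ∃ C : ℕ, ∀ (n k : ℕ) (g : ℕ → Bool) (f : (Fin n → Bool) → Bool),
      2 * k < n →
      (∀ x, f x = g (∑ i, if x i then 1 else 0)) →
      ((Finset.range (n + 1)).filter (fun v => g v = true)).card = k →
      ∃ (T : ℕ) (mono : Fin T → Finset (Fin n)) (w : Fin T → ℤ) (θ : ℤ),
        T ≤ n ^ (C * k) ∧
        (∀ j, (mono j).card ≤ k) ∧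
        (∀ x : Fin n → Bool,
          f x = true ↔
            (∑ j, w j * (if ∀ i ∈ mono j, x i = true then (1 : ℤ) else 0)) = θ) := by
  refine ⟨2, fun n k g f hkn hf hcard => ?_⟩
  set S : Finset ℕ := (Finset.range (n + 1)).filter (fun v => g v = true) with hS
  obtain ⟨c, hc⟩ := newton S
  simp only [hcard] at hc
  set s0 : Finset (Finset (Fin n)) := Finset.univ.filter (fun A => A.card ≤ k) with hs0
  set e := s0.equivFin.symm with he
  refine ⟨s0.card, fun j => (e j : Finset (Fin n)), fun j => c ((e j : Finset (Fin n)).card),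
    0, ?_, ?_, ?_⟩
  · -- cardinality bound
    have hcards : s0.card = ∑ d ∈ Finset.range (k + 1), n.choose d := by
      have h2 : s0 = Finset.univ.filter
          (fun A : Finset (Fin n) => A.card ≤ k ∧ A ⊆ (Finset.univ : Finset (Fin n))) := by
        simp [hs0]
      rw [h2, powerset_filter, Finset.card_biUnion]
      · refine Finset.sum_congr rfl fun d _ => ?_
        rw [Finset.card_powersetCard, Finset.card_univ, Fintype.card_fin]
      · intro d hd d' hd' hne
        exact pairwise_powersetCard n k Finset.univ hd hd' hne
    rw [hcards]
    rcases Nat.eq_zero_or_pos k with rfl | hk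
    · simp
    · have hn1 : 1 ≤ n := by omega
      have hb : ∀ d ∈ Finset.range (k + 1), n.choose d ≤ n ^ k := fun d hd =>
        (Nat.choose_le_pow n d).trans
          (Nat.pow_le_pow_right hn1 (Nat.lt_succ_iff.mp (Finset.mem_range.mp hd)))
      calc ∑ d ∈ Finset.range (k + 1), n.choose d
          ≤ (k + 1) * n ^ k := by
            simpa using Finset.sum_le_card_nsmul _ _ _ hb
        _ ≤ n * n ^ k := Nat.mul_le_mul_right _ (by omega)
        _ = n ^ (k + 1) := by ring
        _ ≤ n ^ (2 * k) := Nat.pow_le_pow_right hn1 (by omega)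
  · -- card of monomials
    intro j
    exact (Finset.mem_filter.mp (e j).2).2
  · -- main equivalence
    intro x
    set X : Finset (Fin n) := Finset.univ.filter (fun i => x i = true) with hX
    have hm : (∑ i, if x i then (1 : ℕ) else 0) = X.card := by
      rw [hX, Finset.card_filter]
    have hsum : (∑ j, c ((e j : Finset (Fin n)).card) *
          (if ∀ i ∈ (e j : Finset (Fin n)), x i = true then (1 : ℤ) else 0))
        = ∑ d ∈ Finset.range (k + 1), (X.card.choose d : ℤ) * c d := by
      rw [← sum_over_subsets n k c X]
      have := Equiv.sum_comp e (fun A : s0 =>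
        c ((A : Finset (Fin n)).card) * (if (A : Finset (Fin n)) ⊆ X then (1 : ℤ) else 0))
      rw [show (∑ j, c ((e j : Finset (Fin n)).card) *
          (if ∀ i ∈ (e j : Finset (Fin n)), x i = true then (1 : ℤ) else 0))
          = ∑ j, c ((e j : Finset (Fin n)).card) *
            (if (e j : Finset (Fin n)) ⊆ X then (1 : ℤ) else 0) from
        Finset.sum_congr rfl fun j _ => by
          congr 1
          refine if_congr ?_ rfl rfl
          simp [hX, Finset.subset_iff]]
      rw [this, ← Finset.sum_coe_sort s0 (fun A =>
        c A.card * (if A ⊆ X then (1 : ℤ) else 0))]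
    have hprod : (∏ v ∈ S, ((X.card : ℤ) - v)) = 0 ↔ g X.card = true := by
      rw [Finset.prod_eq_zero_iff]
      constructor
      · rintro ⟨v, hv, hv0⟩
        have : X.card = v := by exact_mod_cast sub_eq_zero.mp hv0
        rw [hS, Finset.mem_filter] at hv
        rw [this]; exact hv.2
      · intro hg
        refine ⟨X.card, ?_, by ring⟩
        rw [hS, Finset.mem_filter, Finset.mem_range]
        have hXn : X.card ≤ n :=
          le_trans (Finset.card_filter_le _ _) (by simp)
        exact ⟨by omega, hg⟩
    rw [hf x, hm, hsum]
    rw [← hprod, hc X.card]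
    rw [show (∑ d ∈ Finset.range (k + 1), (X.card.choose d : ℤ) * c d)
        = ∑ d ∈ Finset.range (k + 1), c d * (X.card.choose d : ℤ) from
      Finset.sum_congr rfl fun d _ => mul_comm _ _]
end

section
/- Suppose a Boolean function f : {0,1}^n -> {0,1} satisfies: the negation of f equals EMAJ(D_1,...,D_t,u), meaning f(x) = 0 iff exactly u of D_1(x),...,D_t(x) equal 1. Then there exist Boolean functions D'_1,...,D'_{t'} with t' = O(t^2), each of which is either an AND of two of the D_i's, a D_i itself, a negation, or a constant, and signs eps_j in {-1,+1}, such that for all x: sum_j eps_j * D'_j(x) >= 0, with equality iff f(x) = 0. -/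
/-- If ¬f = EMAJ(D₁,...,D_t,u) (i.e. f(x)=0 iff exactly u of the Dᵢ(x)
equal 1), then there are t' = O(t²) Boolean functions D'ⱼ — each an AND of two of the
Dᵢ's, a Dᵢ itself, a negation of a Dᵢ, or a constant — and signs εⱼ ∈ {±1} such that
for all x, ∑ⱼ εⱼ·D'ⱼ(x) ≥ 0 with equality iff f(x) = 0. -/
theorem stmt_6 :
    ∃ C : ℕ, ∀ (n t u : ℕ) (f : (Fin n → Bool) → Bool)
      (D : Fin t → (Fin n → Bool) → Bool),
      (∀ x, (f x = false ↔ (Finset.univ.filter fun i => D i x = true).card = u)) →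
      ∃ (t' : ℕ) (D' : Fin t' → (Fin n → Bool) → Bool) (eps : Fin t' → ℤ),
        t' ≤ C * (t + 1) ^ 2 ∧
        (∀ j, eps j = 1 ∨ eps j = -1) ∧
        (∀ j, (∃ i₁ i₂, ∀ x, D' j x = (D i₁ x && D i₂ x)) ∨
              (∃ i, ∀ x, D' j x = D i x) ∨
              (∃ i, ∀ x, D' j x = !(D i x)) ∨
              (∃ b, ∀ x, D' j x = b)) ∧
        (∀ x, 0 ≤ ∑ j, eps j * (if D' j x then (1 : ℤ) else 0) ∧
          ((∑ j, eps j * (if D' j x then (1 : ℤ) else 0)) = 0 ↔ f x = false)) := by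
  use 4
  intro n t u f D hf
  by_cases hu : u ≤ t
  case neg =>
    -- u > t : f is never false, use a single constant-true term
    refine ⟨1, fun _ _ => true, fun _ => 1, ?_, fun j => Or.inl rfl, ?_, ?_⟩
    · nlinarith [sq_nonneg (t+1)]
    · intro j; exact Or.inr (Or.inr (Or.inr ⟨true, fun x => rfl⟩))
    · intro x
      have hsum : (∑ j : Fin 1, (1 : ℤ) * (if true then (1:ℤ) else 0)) = 1 := by simp
      rw [hsum]
      refine ⟨by norm_num, ?_⟩
      constructor
      · intro h; norm_num at h
      · intro h
        have := (hf x).1 h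
        have hle : (Finset.univ.filter fun i => D i x = true).card ≤ t := by
          simpa using Finset.card_filter_le Finset.univ (fun i => D i x = true)
        omega
  case pos =>
    -- u ≤ t : use (S - u)^2 = ∑ DᵢDⱼ - 2u ∑ Dᵢ + u²
    classical
    let g : (Fin t × Fin t) ⊕ ((Fin (2*u) × Fin t) ⊕ Fin (u*u)) →
        (Fin n → Bool) → Bool := fun j => match j with
      | .inl (i₁, i₂) => fun x => D i₁ x && D i₂ x
      | .inr (.inl (_, i)) => fun x => D i x
      | .inr (.inr _) => fun _ => true
    let ε : (Fin t × Fin t) ⊕ ((Fin (2*u) × Fin t) ⊕ Fin (u*u)) → ℤ := fun j =>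
      match j with
      | .inl _ => 1
      | .inr (.inl _) => -1
      | .inr (.inr _) => 1
    let e := Fintype.equivFin ((Fin t × Fin t) ⊕ ((Fin (2*u) × Fin t) ⊕ Fin (u*u)))
    refine ⟨_, fun j => g (e.symm j), fun j => ε (e.symm j), ?_, ?_, ?_, ?_⟩
    · have hcard : Fintype.card ((Fin t × Fin t) ⊕ ((Fin (2*u) × Fin t) ⊕ Fin (u*u)))
          = t*t + (2*u*t + u*u) := by simp
      rw [hcard]; nlinarith
    · intro j
      rcases h : e.symm j with ⟨i₁, i₂⟩ | (⟨k, i⟩ | k) <;> simp [ε, h]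
    · intro j
      rcases h : e.symm j with ⟨i₁, i₂⟩ | (⟨k, i⟩ | k)
      · exact Or.inl ⟨i₁, i₂, fun x => by show g (e.symm j) x = _; rw [h]⟩
      · exact Or.inr (Or.inl ⟨i, fun x => by show g (e.symm j) x = _; rw [h]⟩)
      · exact Or.inr (Or.inr (Or.inr ⟨true, fun x => by
          show g (e.symm j) x = _; rw [h]⟩))
    · intro x
      set S : ℤ := ∑ i : Fin t, (if D i x then (1:ℤ) else 0) with hS
      have hneg : (∑ i : Fin t, -(if D i x = true then (1:ℤ) else 0)) = -S := by
        rw [hS, ← Finset.sum_neg_distrib]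
      have h1 : ∀ i₁ i₂ : Fin t,
          ε (.inl (i₁, i₂)) * (if g (.inl (i₁, i₂)) x then (1:ℤ) else 0)
          = (if D i₁ x then (1:ℤ) else 0) * (if D i₂ x then (1:ℤ) else 0) := by
        intro i₁ i₂
        by_cases hh₁ : D i₁ x <;> by_cases hh₂ : D i₂ x <;> simp [ε, g, hh₁, hh₂]
      have h2 : ∀ (k : Fin (2*u)) (i : Fin t),
          ε (.inr (.inl (k, i))) * (if g (.inr (.inl (k, i))) x then (1:ℤ) else 0)
          = -(if D i x then (1:ℤ) else 0) := by
        intro k i; by_cases hh₁ : D i x <;> simp [ε, g, hh₁]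
      have h3 : ∀ k : Fin (u*u),
          ε (.inr (.inr k)) * (if g (.inr (.inr k)) x then (1:ℤ) else 0) = 1 := by
        intro k; simp [ε, g]
      have A : (∑ p : Fin t × Fin t,
          ε (.inl p) * (if g (.inl p) x then (1:ℤ) else 0)) = S * S := by
        rw [Fintype.sum_prod_type]
        rw [Finset.sum_congr rfl fun i₁ _ => Finset.sum_congr rfl fun i₂ _ => h1 i₁ i₂]
        rw [← Finset.sum_mul_sum, hS]
      have B : (∑ p : Fin (2*u) × Fin t,
          ε (.inr (.inl p)) * (if g (.inr (.inl p)) x then (1:ℤ) else 0))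
          = -((2*(u:ℤ)) * S) := by
        rw [Fintype.sum_prod_type]
        rw [Finset.sum_congr rfl fun k _ => Finset.sum_congr rfl fun i _ => h2 k i]
        rw [Finset.sum_congr rfl fun k _ => hneg]
        rw [Finset.sum_const, Finset.card_univ, Fintype.card_fin, nsmul_eq_mul]
        push_cast; ring
      have Cc : (∑ k : Fin (u*u),
          ε (.inr (.inr k)) * (if g (.inr (.inr k)) x then (1:ℤ) else 0))
          = (u:ℤ) * u := by
        rw [Finset.sum_congr rfl fun k _ => h3 k]
        rw [Finset.sum_const, Finset.card_univ, Fintype.card_fin, nsmul_eq_mul]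
        push_cast; ring
      have hsum : (∑ j, ε (e.symm j) * (if g (e.symm j) x then (1:ℤ) else 0))
          = (S - u)^2 := by
        rw [Equiv.sum_comp e.symm (fun i => ε i * (if g i x then (1:ℤ) else 0))]
        rw [Fintype.sum_sum_type, Fintype.sum_sum_type]
        rw [A, B, Cc]
        ring
      rw [hsum]
      refine ⟨sq_nonneg _, ?_⟩
      have hcardS : S = ((Finset.univ.filter fun i => D i x = true).card : ℤ) := by
        rw [hS, Finset.sum_boole]
      rw [hf x, sq_eq_zero_iff, sub_eq_zero, hcardS]
      exact_mod_cast Iff.rfl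
end
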